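/- Let G ≅ Z_{ℓ1} × ⋯ × Z_{ℓr} be a finite abelian group with exponent ℓ*, I a non-periodic multiset with elements from G with multiplier group H, K = ⟨t_1,...,t_m⟩ ≤ H with t_iI = I + g_i, and C = gcd(t_1−1,...,t_m−1, ℓ*). If some translate I + z_0 is fixed by all elements of K, then the set of z ∈ G such that I + z is fixed by all of K has exactly ∏_{i=1}^r gcd(C, ℓ_i) elements. -/

import Mathlib

/-- The multiplicity function of the translated multiset `I + g`:
`m_{I+g}(i) = m_I(i - g)`. -/
def translateM {G : Type*} [AddGroup G] (m : G → ℕ) (g : G) : G → ℕ :=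
  fun i => m (i - g)

/-- The multiplicity function of the dilated multiset `t·I = {(t·i)^{m(i)} : i ∈ I}`:
`m_{tI}(x) = ∑_{j : t • j = x} m_I(j)`. -/
def dilateM {G : Type*} [AddGroup G] [Fintype G] [DecidableEq G] (t : ℕ) (m : G → ℕ) :
    G → ℕ :=
  fun x => ∑ j ∈ Finset.univ.filter (fun j : G => t • j = x), m j

section helpers
variable {G : Type*} [AddCommGroup G] [Fintype G] [DecidableEq G]

omit [Fintype G] [DecidableEq G] in
lemma stmt8_trans_trans (m : G → ℕ) (a b : G) :
    translateM (translateM m a) b = translateM m (a + b) := by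
  funext x; simp [translateM, sub_sub, add_comm]

omit [Fintype G] [DecidableEq G] in
lemma stmt8_trans_zero (m : G → ℕ) : translateM m 0 = m := by
  funext x; simp [translateM]

omit [Fintype G] [DecidableEq G] in
lemma stmt8_trans_inj (m : G → ℕ) (hnp : ∀ g : G, translateM m g = m → g = 0) {a b : G}
    (hab : translateM m a = translateM m b) : a = b := by
  have h1 : translateM m (a - b) = m := by
    funext x
    have := congrFun hab (x + b)
    simp only [translateM, add_sub_cancel_right] at this
    simpa [translateM, sub_sub, show x - (a - b) = x + b - a by abel] using this
  exact sub_eq_zero.mp (hnp _ h1)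

lemma stmt8_dilate_translate (s : ℕ) (m : G → ℕ) (z : G) :
    dilateM s (translateM m z) = translateM (dilateM s m) (s • z) := by
  funext x
  simp only [dilateM, translateM]
  refine Finset.sum_bij' (fun a _ => a - z) (fun b _ => b + z) ?_ ?_ ?_ ?_ ?_
  · intro a ha
    simp only [Finset.mem_filter, Finset.mem_univ, true_and] at ha ⊢
    rw [smul_sub, ha]
  · intro b hb
    simp only [Finset.mem_filter, Finset.mem_univ, true_and] at hb ⊢
    rw [smul_add, hb]; abel
  · intro a _; exact sub_add_cancel a z
  · intro b _; exact add_sub_cancel_right b z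
  · intro a _; rfl
end helpers

lemma stmt8_card_ker (C n : ℕ) [NeZero n] :
    Nat.card {x : ZMod n // (C : ℤ) • x = 0} = Nat.gcd C n := by
  have hn : n ≠ 0 := NeZero.ne n
  set f : ZMod n →+ ZMod n := AddMonoidHom.mulLeft (C : ZMod n) with hf
  have hkermem : ∀ x : ZMod n, x ∈ f.ker ↔ (C : ℤ) • x = 0 := by
    intro x
    rw [AddMonoidHom.mem_ker, natCast_zsmul, nsmul_eq_mul]; rfl
  have hrange : f.range = AddSubgroup.zmultiples ((C : ZMod n)) := by
    ext y
    simp only [AddMonoidHom.mem_range, AddSubgroup.mem_zmultiples_iff, hf,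
      AddMonoidHom.coe_mulLeft]
    constructor
    · rintro ⟨x, rfl⟩
      exact ⟨(x.val : ℤ), by
        rw [natCast_zsmul, nsmul_eq_mul, ZMod.natCast_val, ZMod.cast_id, mul_comm]⟩
    · rintro ⟨k, rfl⟩
      exact ⟨(k : ZMod n), by rw [zsmul_eq_mul, mul_comm]⟩
  have hcr : Nat.card f.range = n / n.gcd C := by
    rw [hrange, Nat.card_zmultiples, ZMod.addOrderOf_coe C hn]
  have h1 : Nat.card (ZMod n) = Nat.card (ZMod n ⧸ f.ker) * Nat.card f.ker :=
    AddSubgroup.card_eq_card_quotient_mul_card_addSubgroup f.ker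
  have h2 : Nat.card (ZMod n ⧸ f.ker) = Nat.card f.range :=
    Nat.card_congr (QuotientAddGroup.quotientKerEquivRange f).toEquiv
  have hg0 : n.gcd C ≠ 0 := fun hh => hn (Nat.eq_zero_of_gcd_eq_zero_left hh)
  have hdvd : n.gcd C ∣ n := Nat.gcd_dvd_left n C
  have h3 : Nat.card (ZMod n) = n := Nat.card_zmod n
  have h4 : (n / n.gcd C) * Nat.card f.ker = n := by
    rw [← hcr, ← h2, ← h1, h3]
  have h5 : Nat.card f.ker = n.gcd C := by
    have hpos : 0 < n / n.gcd C := Nat.div_pos (Nat.le_of_dvd (Nat.pos_of_ne_zero hn) hdvd)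
      (Nat.pos_of_ne_zero hg0)
    refine Nat.eq_of_mul_eq_mul_left hpos ?_
    rw [h4, Nat.div_mul_cancel hdvd]
  rw [← Nat.gcd_comm n C, ← h5]
  exact Nat.card_congr (Equiv.subtypeEquivRight fun x => (hkermem x).symm)


/-- If `I` is non-periodic on `G ≅ ℤ_{ℓ₁} × ⋯ × ℤ_{ℓᵣ}`, `K = ⟨t₁,…,tₖ⟩` consists of
multipliers with `tᵢI = I + gᵢ`, `C = gcd(t₁−1,…,tₖ−1, ℓ*)`, and some translate
`I + z₀` is fixed by all of `K`, then there are exactly `∏ᵢ gcd(C, ℓᵢ)` elements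
`z ∈ G` with `I + z` fixed by all of `K`. -/
theorem stmt8 {G : Type*} [AddCommGroup G] [Fintype G] [DecidableEq G]
    (r : ℕ) (ℓ : Fin r → ℕ) [∀ i, NeZero (ℓ i)] (Φ : G ≃+ ∀ i, ZMod (ℓ i))
    (m : G → ℕ) (hnp : ∀ g : G, translateM m g = m → g = 0)
    (k : ℕ) (t : Fin k → ℕ) (ht : ∀ i, Nat.Coprime (t i) (AddMonoid.exponent G))
    (g : Fin k → G) (h : ∀ i, dilateM (t i) m = translateM m (g i))
    (C : ℕ)
    (hC : C = Int.gcd (Finset.univ.gcd fun i => (t i : ℤ) - 1) (AddMonoid.exponent G : ℤ))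
    (z₀ : G)
    (hz₀ : ∀ (s : ℕ) (hs : Nat.Coprime s (AddMonoid.exponent G)),
      ZMod.unitOfCoprime s hs ∈
          Subgroup.closure (Set.range fun i => ZMod.unitOfCoprime (t i) (ht i)) →
        dilateM s (translateM m z₀) = translateM m z₀) :
    {z : G | ∀ (s : ℕ) (hs : Nat.Coprime s (AddMonoid.exponent G)),
        ZMod.unitOfCoprime s hs ∈
            Subgroup.closure (Set.range fun i => ZMod.unitOfCoprime (t i) (ht i)) →
          dilateM s (translateM m z) = translateM m z}.ncard
      = ∏ i, Nat.gcd C (ℓ i) := by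
  classical
  have hE : ∀ x : G, AddMonoid.exponent G • x = 0 := fun x =>
    AddMonoid.exponent_nsmul_eq_zero x
  letI : Module (ZMod (AddMonoid.exponent G)) G := AddCommGroup.zmodModule hE
  -- each element of K translates the dilate
  have hgamma : ∀ (s : ℕ) (hs : Nat.Coprime s (AddMonoid.exponent G)),
      ZMod.unitOfCoprime s hs ∈
          Subgroup.closure (Set.range fun i => ZMod.unitOfCoprime (t i) (ht i)) →
      dilateM s m = translateM m (z₀ - s • z₀) := by
    intro s hs hmem
    have h0 := hz₀ s hs hmem
    rw [stmt8_dilate_translate] at h0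
    have h1 := congrArg (fun f => translateM f (-(s • z₀))) h0
    simp only [stmt8_trans_trans] at h1
    rw [add_neg_cancel, stmt8_trans_zero, ← sub_eq_add_neg] at h1
    exact h1
  -- stabilizer argument
  have hstab : ∀ w : G, (∀ i, (t i) • w = w) → ∀ (s : ℕ) (hs : Nat.Coprime s (AddMonoid.exponent G)),
      ZMod.unitOfCoprime s hs ∈
          Subgroup.closure (Set.range fun i => ZMod.unitOfCoprime (t i) (ht i)) →
      s • w = w := by
    intro w hw s hs hmem
    have hcast : ∀ (a : ℕ), ((a : ZMod (AddMonoid.exponent G))) • w = a • w := fun a =>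
      Nat.cast_smul_eq_nsmul _ a w
    have hle : Subgroup.closure (Set.range fun i => ZMod.unitOfCoprime (t i) (ht i)) ≤
        MulAction.stabilizer (ZMod (AddMonoid.exponent G))ˣ w := by
      rw [Subgroup.closure_le]
      rintro u ⟨i, rfl⟩
      simp only [SetLike.mem_coe, MulAction.mem_stabilizer_iff]
      rw [Units.smul_def, ZMod.coe_unitOfCoprime, hcast, hw i]
    have h2 := hle hmem
    rw [MulAction.mem_stabilizer_iff, Units.smul_def, ZMod.coe_unitOfCoprime, hcast] at h2
    exact h2
  -- membership characterization
  have hmem_iff : ∀ z : G,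
      (∀ (s : ℕ) (hs : Nat.Coprime s (AddMonoid.exponent G)),
        ZMod.unitOfCoprime s hs ∈
            Subgroup.closure (Set.range fun i => ZMod.unitOfCoprime (t i) (ht i)) →
          dilateM s (translateM m z) = translateM m z)
      ↔ ∀ i : Fin k, (t i) • (z - z₀) = z - z₀ := by
    intro z
    constructor
    · intro hz i
      have hmem : ZMod.unitOfCoprime (t i) (ht i) ∈
          Subgroup.closure (Set.range fun i => ZMod.unitOfCoprime (t i) (ht i)) :=
        Subgroup.subset_closure ⟨i, rfl⟩
      have h0 := hz (t i) (ht i) hmem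
      rw [stmt8_dilate_translate, hgamma (t i) (ht i) hmem, stmt8_trans_trans] at h0
      have h1 := stmt8_trans_inj m hnp h0
      rw [smul_sub, ← sub_eq_zero]
      calc t i • z - t i • z₀ - (z - z₀) = z₀ - t i • z₀ + t i • z - z := by abel
        _ = 0 := sub_eq_zero.mpr h1
    · intro hz s hs hmem
      have hsw : s • (z - z₀) = z - z₀ := hstab (z - z₀) hz s hs hmem
      rw [stmt8_dilate_translate, hgamma s hs hmem, stmt8_trans_trans]
      have harg : z₀ - s • z₀ + s • z = z := by
        rw [smul_sub] at hsw
        rw [← sub_eq_zero]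
        calc z₀ - s • z₀ + s • z - z = s • z - s • z₀ - (z - z₀) := by abel
          _ = 0 := sub_eq_zero.mpr hsw
      rw [harg]
  -- equivalence with C-torsion
  have hCiff : ∀ w : G, (∀ i, (t i) • w = w) ↔ (C : ℤ) • w = 0 := by
    intro w
    constructor
    · intro hw
      have hdvd : (addOrderOf w : ℤ) ∣ (C : ℤ) := by
        rw [hC]
        refine Int.dvd_coe_gcd ?_ ?_
        · refine Finset.dvd_gcd ?_
          intro i _
          have : ((t i : ℤ) - 1) • w = 0 := by
            rw [sub_smul, one_zsmul, natCast_zsmul, hw i, sub_self]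
          exact addOrderOf_dvd_iff_zsmul_eq_zero.mpr this
        · exact Int.natCast_dvd_natCast.mpr (AddMonoid.addOrder_dvd_exponent w)
      exact addOrderOf_dvd_iff_zsmul_eq_zero.mp hdvd
    · intro hw i
      have hdvd : (C : ℤ) ∣ (t i : ℤ) - 1 := by
        rw [hC]
        exact dvd_trans (Int.gcd_dvd_left _ _) (Finset.gcd_dvd (Finset.mem_univ i))
      obtain ⟨c, hc⟩ := hdvd
      have : ((t i : ℤ) - 1) • w = 0 := by
        rw [hc, mul_comm, mul_smul, hw, smul_zero]
      rw [sub_smul, one_zsmul, natCast_zsmul, sub_eq_zero] at this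
      exact this
  -- rewrite the set
  have hset : {z : G | ∀ (s : ℕ) (hs : Nat.Coprime s (AddMonoid.exponent G)),
        ZMod.unitOfCoprime s hs ∈
            Subgroup.closure (Set.range fun i => ZMod.unitOfCoprime (t i) (ht i)) →
          dilateM s (translateM m z) = translateM m z}
      = {z : G | (C : ℤ) • (z - z₀) = 0} := by
    ext z
    simp only [Set.mem_setOf_eq]
    rw [hmem_iff z, hCiff (z - z₀)]
  rw [hset, ← Nat.card_coe_set_eq]
  have e1 : {z : G | (C : ℤ) • (z - z₀) = 0} ≃ {w : G // (C : ℤ) • w = 0} :=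
    (Equiv.subtypeEquiv (Equiv.subRight z₀) (fun z => by
      simp [Equiv.subRight]))
  have e2 : {w : G // (C : ℤ) • w = 0} ≃ {v : (∀ i, ZMod (ℓ i)) // (C : ℤ) • v = 0} :=
    Equiv.subtypeEquiv Φ.toEquiv (fun w => by
      rw [← EmbeddingLike.map_eq_zero_iff (f := Φ), map_zsmul]; rfl)
  have e3 : {v : (∀ i, ZMod (ℓ i)) // (C : ℤ) • v = 0}
      ≃ ∀ i, {x : ZMod (ℓ i) // (C : ℤ) • x = 0} :=
    (Equiv.subtypeEquivRight (fun v => by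
      simp [funext_iff])).trans (Equiv.subtypePiEquivPi)
  rw [Nat.card_congr ((e1.trans e2).trans e3), Nat.card_pi]
  exact Finset.prod_congr rfl fun i _ => stmt8_card_ker C (ℓ i)
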